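/- arXiv:1802.09946 — 2 statements merged into one kernel-verified Lean document; each statement's English description precedes it below -/
import Mathlib

section
/- Let λ = (λ_1, …, λ_m) be an integral dominant weight of size m, let k ∈ {1,…,m} and μ0 ∈ ℤ satisfy λ_k + m + 1 − k = 1 − μ0 (so the gl(m|1)-weight Λ = (λ; μ0) is atypical with atypical root ε_k − δ_1). Then in F the following identity holds: y^{μ0} · (e_m(x) · a_δ)^{−1} · Σ_{w ∈ S_m} ε(w) · w( x_1^{λ_1+m−1} x_2^{λ_2+m−2} ⋯ x_m^{λ_m} · x_k · Π_{i ≠ k} (x_i + y) ) = (y^{μ0} / e_m(x)) · Σ_{i=0}^{m−1} ( Σ_{α ∈ A_{k,i}} s_α ) · y^{m−1−i}, where A_{k,i} is the set of integral dominant weights α of size m such that α_j − λ_j ∈ {0,1} for all j, Σ_{j=1}^m (α_j − λ_j) = i + 1, and α_k − λ_k = 1. (The left-hand side is the Su–Zhang character formula for the irreducible gl(m|1)-module with highest weight Λ, with the atypical root removed from the product over positive odd roots, written in the variables x_i = e^{ε_i}, y = e^{δ_1}.) -/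
open scoped Classical

noncomputable section

/-- The field `F = ℚ(x_1, …, x_m, y)` of rational functions in `m+1` indeterminates. -/
abbrev F (m : ℕ) : Type := FractionRing (MvPolynomial (Option (Fin m)) ℚ)

/-- The variable `x_i` as an element of `F`. -/
def Xv (m : ℕ) (i : Fin m) : F m :=
  algebraMap (MvPolynomial (Option (Fin m)) ℚ) (F m) (MvPolynomial.X (some i))

/-- The variable `y` as an element of `F`. -/
def Yv (m : ℕ) : F m :=
  algebraMap (MvPolynomial (Option (Fin m)) ℚ) (F m) (MvPolynomial.X none)

/-- `a_α = ∑_{w ∈ S_m} ε(w) · w(x₁^{α₁} ⋯ x_m^{α_m})`, where `w` permutes the variables. -/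
def aAlt (m : ℕ) (α : Fin m → ℤ) : F m :=
  ∑ w : Equiv.Perm (Fin m), (Equiv.Perm.sign w : ℤ) • ∏ i, Xv m (w i) ^ α i

/-- `δ = (m-1, m-2, …, 1, 0)`. -/
def deltaW (m : ℕ) : Fin m → ℤ := fun i => (m : ℤ) - 1 - (i : ℕ)

/-- The Schur function `s_λ = a_{λ+δ} / a_δ` of an integral dominant weight. -/
def schurW (m : ℕ) (lam : Fin m → ℤ) : F m :=
  aAlt m (fun i => lam i + deltaW m i) / aAlt m (deltaW m)

/-- The elementary symmetric polynomial `e_i(x_1, …, x_m)` in `F`. -/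
def eX (m : ℕ) (i : ℕ) : F m :=
  ∑ s ∈ Finset.powersetCard i (Finset.univ : Finset (Fin m)), ∏ j ∈ s, Xv m j

/-- The complete homogeneous symmetric polynomial `h_r(x_1, …, x_m)` in `F`. -/
def hXF (m : ℕ) (r : ℕ) : F m :=
  ∑ d ∈ (Finset.univ : Finset (Fin m)).sym r, ((d : Multiset (Fin m)).map (Xv m)).prod

/-- `ḣ_r(x) = h_r(x_1⁻¹, …, x_m⁻¹)`. -/
def hdotXF (m : ℕ) (r : ℕ) : F m :=
  ∑ d ∈ (Finset.univ : Finset (Fin m)).sym r,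
    ((d : Multiset (Fin m)).map (fun j => (Xv m j)⁻¹)).prod

/-- `h_r(x)` for `r : ℤ`, with `h_r = 0` for `r < 0`. -/
def hXZ (m : ℕ) (r : ℤ) : F m := if 0 ≤ r then hXF m r.toNat else 0

/-- `ḣ_r(x)` for `r : ℤ`, with `ḣ_r = 0` for `r < 0`. -/
def hdotXZ (m : ℕ) (r : ℤ) : F m := if 0 ≤ r then hdotXF m r.toNat else 0

/-- The complete super-symmetric function `h_r(x/y) = ∑_{k=0}^r h_k(x) y^{r-k}` (`0` for `r < 0`). -/
def hSup (m : ℕ) (r : ℤ) : F m :=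
  if 0 ≤ r then ∑ k ∈ Finset.range (r.toNat + 1), hXF m k * Yv m ^ (r.toNat - k) else 0

/-- `ḣ_r(x/y) = ∑_{k=0}^r ḣ_k(x) y^{-(r-k)}` (`0` for `r < 0`). -/
def hdotSup (m : ℕ) (r : ℤ) : F m :=
  if 0 ≤ r then ∑ k ∈ Finset.range (r.toNat + 1), hdotXF m k * (Yv m)⁻¹ ^ (r.toNat - k) else 0

/-- The super-symmetric function `s_{(ν;μ)}(x/y)` of a composite partition `(ν; μ)` with
`q = l(ν)`, `p = l(μ)`, given as the `(q+p) × (q+p)` block determinant (0-based indices). -/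
def sSup (m : ℕ) (ν μ : ℕ → ℕ) (q p : ℕ) : F m :=
  Matrix.det (Matrix.of fun r c : Fin (q + p) =>
    if (c : ℕ) < q then hdotSup m ((ν (q - 1 - (c : ℕ)) : ℤ) + (c : ℕ) - (r : ℕ))
    else hSup m ((μ ((c : ℕ) - q) : ℤ) + (r : ℕ) - (c : ℕ)))

/-- `s^{det}_{(ν;μ)}(x)`: the same block determinant built from `h_s(x)` and `ḣ_s(x)`. -/
def sDet (m : ℕ) (ν μ : ℕ → ℕ) (q p : ℕ) : F m :=
  Matrix.det (Matrix.of fun r c : Fin (q + p) =>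
    if (c : ℕ) < q then hdotXZ m ((ν (q - 1 - (c : ℕ)) : ℤ) + (c : ℕ) - (r : ℕ))
    else hXZ m ((μ ((c : ℕ) - q) : ℤ) + (r : ℕ) - (c : ℕ)))

/-- An integral dominant weight of size `m`: `λ_1 ≥ λ_2 ≥ ⋯ ≥ λ_m`. -/
def IsDom (m : ℕ) (lam : Fin m → ℤ) : Prop := ∀ i j : Fin m, i ≤ j → lam j ≤ lam i

/-- `f` is (the part function of) a partition with exactly `q` (positive) parts,
0-based indexing: the parts are `f 0 ≥ f 1 ≥ ⋯`. -/
def IsPartitionOfLen (f : ℕ → ℕ) (q : ℕ) : Prop :=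
  (∀ i j : ℕ, i ≤ j → f j ≤ f i) ∧ (∀ i : ℕ, 0 < f i ↔ i < q)

end

lemma Xv_ne_zero (m : ℕ) (i : Fin m) : Xv m i ≠ 0 := by
  simp only [Xv, ne_eq, map_eq_zero_iff _ (IsFractionRing.injective (MvPolynomial (Option (Fin m)) ℚ) (F m))]
  exact MvPolynomial.X_ne_zero _

lemma aAlt_eq_zero (m : ℕ) (α : Fin m → ℤ) (i j : Fin m) (hij : i ≠ j) (h : α i = α j) :
    aAlt m α = 0 := by
  have h1 : ∀ i', α (Equiv.swap i j i') = α i' := by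
    intro i'
    rcases eq_or_ne i' i with rfl | hi
    · rw [Equiv.swap_apply_left, ← h]
    rcases eq_or_ne i' j with rfl | hj
    · rw [Equiv.swap_apply_right, h]
    · rw [Equiv.swap_apply_of_ne_of_ne hi hj]
  have step : ∀ w : Equiv.Perm (Fin m),
      ((Equiv.Perm.sign (w * Equiv.swap i j) : ℤ) • ∏ i', Xv m ((w * Equiv.swap i j) i') ^ α i')
      = -((Equiv.Perm.sign w : ℤ) • ∏ i', Xv m (w i') ^ α i') := by
    intro w
    have h2 : ∏ i', Xv m ((w * Equiv.swap i j) i') ^ α i'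
        = ∏ i', Xv m (w i') ^ α i' := by
      rw [← Equiv.prod_comp (Equiv.swap i j) (fun i' => Xv m (w i') ^ α i')]
      refine Finset.prod_congr rfl fun i' _ => ?_
      simp [h1 i']
    rw [h2, Equiv.Perm.sign_mul, Equiv.Perm.sign_swap hij]
    simp [neg_smul]
  have key : aAlt m α = -aAlt m α := by
    calc aAlt m α
        = ∑ w : Equiv.Perm (Fin m), ((Equiv.Perm.sign (w * Equiv.swap i j) : ℤ) •
            ∏ i', Xv m ((w * Equiv.swap i j) i') ^ α i') :=
          (Equiv.sum_comp (Equiv.mulRight (Equiv.swap i j))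
            (fun w => (Equiv.Perm.sign w : ℤ) • ∏ i', Xv m (w i') ^ α i')).symm
      _ = ∑ w : Equiv.Perm (Fin m), -((Equiv.Perm.sign w : ℤ) • ∏ i', Xv m (w i') ^ α i') :=
          Finset.sum_congr rfl fun w _ => step w
      _ = -aAlt m α := by rw [aAlt, ← Finset.sum_neg_distrib]
  have h2 : (2 : F m) * aAlt m α = 0 := by linear_combination key
  rcases mul_eq_zero.mp h2 with h' | h'
  · exact absurd h' two_ne_zero
  · exact h'

lemma adjacent_to_dom (m : ℕ) (α : Fin m → ℤ)
    (hadj : ∀ i : Fin m, ∀ h : (i : ℕ) + 1 < m, α ⟨(i : ℕ) + 1, h⟩ ≤ α i) :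
    IsDom m α := by
  have key : ∀ d : ℕ, ∀ i j : Fin m, (j : ℕ) = (i : ℕ) + d → α j ≤ α i := by
    intro d
    induction d with
    | zero => intro i j hij; have : j = i := Fin.ext (by omega); rw [this]
    | succ d ih =>
        intro i j hij
        have hd : (i : ℕ) + d < m := by omega
        set j' : Fin m := ⟨(i : ℕ) + d, hd⟩
        have hlt : (i : ℕ) + d + 1 < m := by have := j.isLt; omega
        have h1 : α j ≤ α j' := by
          have h2 := hadj j' hlt
          have : j = ⟨(j' : ℕ) + 1, hlt⟩ := Fin.ext (by simp [j']; omega)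
          rw [this]; exact h2
        exact h1.trans (ih i j' rfl)
  intro i j hij
  exact key ((j : ℕ) - (i : ℕ)) i j (by omega)

/-- χ_T as an integer-valued indicator. -/

def chiT (m : ℕ) (T : Finset (Fin m)) : Fin m → ℤ := fun j => if j ∈ T then 1 else 0

lemma vanish (m : ℕ) (lam : Fin m → ℤ) (hdom : IsDom m lam) (T : Finset (Fin m))
    (hnd : ¬ IsDom m (fun i => lam i + chiT m T i)) :
    aAlt m (fun i => lam i + chiT m T i + deltaW m i) = 0 := by
  have hex : ∃ i : Fin m, ∃ h : (i : ℕ) + 1 < m,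
      lam i + chiT m T i < lam ⟨(i : ℕ) + 1, h⟩ + chiT m T ⟨(i : ℕ) + 1, h⟩ := by
    by_contra hc
    push_neg at hc
    exact hnd (adjacent_to_dom m _ fun i h => hc i h)
  obtain ⟨i, h, hlt⟩ := hex
  set j : Fin m := ⟨(i : ℕ) + 1, h⟩
  have hij : i ≠ j := by
    intro hh
    have : (i : ℕ) = (j : ℕ) := by rw [hh]
    simp [j] at this
  have hlamji : lam j ≤ lam i := hdom i j (by simp [j, Fin.le_def])
  have hci : chiT m T i = 0 ∨ chiT m T i = 1 := by unfold chiT; split <;> simp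
  have hcj : chiT m T j = 0 ∨ chiT m T j = 1 := by unfold chiT; split <;> simp
  refine aAlt_eq_zero m _ i j hij ?_
  show lam i + chiT m T i + deltaW m i = lam j + chiT m T j + deltaW m j
  have hji : ((j : ℕ) : ℤ) = ((i : ℕ) : ℤ) + 1 := by simp [j]
  unfold deltaW
  omega

lemma prod_chi (m : ℕ) (T : Finset (Fin m)) (w : Equiv.Perm (Fin m)) :
    ∏ i, Xv m (w i) ^ (chiT m T i) = ∏ i ∈ T, Xv m (w i) := by
  have h1 : ∀ i : Fin m, Xv m (w i) ^ (chiT m T i)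
      = if i ∈ T then Xv m (w i) else 1 := by
    intro i; unfold chiT; split <;> simp
  rw [Finset.prod_congr rfl fun i _ => h1 i, Finset.prod_ite_mem, Finset.univ_inter]

lemma prod_split (m : ℕ) (lam : Fin m → ℤ) (T : Finset (Fin m)) (w : Equiv.Perm (Fin m)) :
    ∏ i, Xv m (w i) ^ (lam i + chiT m T i + deltaW m i)
    = (∏ i, Xv m (w i) ^ (lam i + deltaW m i)) * ∏ i ∈ T, Xv m (w i) := by
  rw [← prod_chi m T w, ← Finset.prod_mul_distrib]
  refine Finset.prod_congr rfl fun i _ => ?_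
  rw [← zpow_add₀ (Xv_ne_zero m (w i))]
  ring_nf

lemma aAlt_eq (m : ℕ) (α : Fin m → ℤ) :
    aAlt m α = ∑ w : Equiv.Perm (Fin m),
      ((Equiv.Perm.sign w : ℤ) : F m) * ∏ i, Xv m (w i) ^ α i := by
  simp [aAlt, zsmul_eq_mul]

lemma L_lemma (m : ℕ) (lam : Fin m → ℤ) (k : Fin m) :
    (∑ w : Equiv.Perm (Fin m), (Equiv.Perm.sign w : ℤ) •
        ((∏ i, Xv m (w i) ^ (lam i + (m : ℤ) - 1 - (i : ℕ))) * Xv m (w k) *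
          ∏ i ∈ Finset.univ.erase k, (Xv m (w i) + Yv m)))
    = ∑ T ∈ Finset.univ.powerset.filter (fun T => k ∈ T),
        aAlt m (fun i => lam i + chiT m T i + deltaW m i) * Yv m ^ (m - T.card) := by
  have hexp : ∀ w : Equiv.Perm (Fin m),
      ∏ i ∈ Finset.univ.erase k, (Xv m (w i) + Yv m)
      = ∑ t ∈ (Finset.univ.erase k).powerset,
          (∏ i ∈ t, Xv m (w i)) * Yv m ^ (m - 1 - t.card) := by
    intro w
    rw [Finset.prod_add]
    refine Finset.sum_congr rfl fun t ht => ?_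
    rw [Finset.prod_const]
    congr 1
    rw [Finset.card_sdiff_of_subset (Finset.mem_powerset.mp ht)]
    congr 1
    rw [Finset.card_erase_of_mem (Finset.mem_univ k), Finset.card_univ, Fintype.card_fin]
  simp only [zsmul_eq_mul]
  calc (∑ w : Equiv.Perm (Fin m), ((Equiv.Perm.sign w : ℤ) : F m) *
        ((∏ i, Xv m (w i) ^ (lam i + (m : ℤ) - 1 - (i : ℕ))) * Xv m (w k) *
          ∏ i ∈ Finset.univ.erase k, (Xv m (w i) + Yv m)))
      = ∑ w : Equiv.Perm (Fin m), ∑ t ∈ (Finset.univ.erase k).powerset,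
          ((Equiv.Perm.sign w : ℤ) : F m) *
          ((∏ i, Xv m (w i) ^ (lam i + chiT m (insert k t) i + deltaW m i))
            * Yv m ^ (m - 1 - t.card)) := by
        refine Finset.sum_congr rfl fun w _ => ?_
        rw [hexp w, Finset.mul_sum, Finset.mul_sum]
        refine Finset.sum_congr rfl fun t ht => ?_
        have hkt : k ∉ t := fun hk =>
          (Finset.mem_erase.mp (Finset.mem_powerset.mp ht hk)).1 rfl
        rw [prod_split m lam (insert k t) w, Finset.prod_insert hkt]
        have hde : ∀ i : Fin m, lam i + deltaW m i = lam i + (m : ℤ) - 1 - (i : ℕ) := by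
          intro i; unfold deltaW; ring
        simp only [hde]
        ring
    _ = ∑ t ∈ (Finset.univ.erase k).powerset,
          aAlt m (fun i => lam i + chiT m (insert k t) i + deltaW m i)
            * Yv m ^ (m - 1 - t.card) := by
        rw [Finset.sum_comm]
        refine Finset.sum_congr rfl fun t _ => ?_
        rw [aAlt_eq, Finset.sum_mul]
        refine Finset.sum_congr rfl fun w _ => ?_
        ring
    _ = ∑ T ∈ Finset.univ.powerset.filter (fun T => k ∈ T),
        aAlt m (fun i => lam i + chiT m T i + deltaW m i) * Yv m ^ (m - T.card) := by
        refine Finset.sum_bij' (fun t _ => insert k t) (fun T _ => T.erase k) ?_ ?_ ?_ ?_ ?_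
        · intro t ht
          simp only [Finset.mem_filter, Finset.mem_powerset]
          exact ⟨Finset.subset_univ _, Finset.mem_insert_self k t⟩
        · intro T hT
          simp only [Finset.mem_powerset]
          intro x hx
          exact Finset.mem_erase.mpr ⟨(Finset.mem_erase.mp hx).1, Finset.mem_univ x⟩
        · intro t ht
          exact Finset.erase_insert (fun hk =>
            (Finset.mem_erase.mp (Finset.mem_powerset.mp ht hk)).1 rfl)
        · intro T hT
          exact Finset.insert_erase (Finset.mem_filter.mp hT).2
        · intro t ht
          have hkt : k ∉ t := fun hk =>
            (Finset.mem_erase.mp (Finset.mem_powerset.mp ht hk)).1 rfl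
          rw [Finset.card_insert_of_notMem hkt]
          have hc : m - 1 - t.card = m - (t.card + 1) := by omega
          rw [hc]

lemma chi_inj (m : ℕ) (lam : Fin m → ℤ) (T T' : Finset (Fin m))
    (h : (fun j => lam j + chiT m T j) = (fun j => lam j + chiT m T' j)) : T = T' := by
  ext j
  have h2 := congrFun h j
  simp only [chiT] at h2
  by_cases hj : j ∈ T <;> by_cases hj' : j ∈ T' <;> simp [hj, hj'] at h2 ⊢

lemma eval_f (m : ℕ) (lam : Fin m → ℤ) (hdom : IsDom m lam) (k : Fin m) (i : ℕ)
    (T : Finset (Fin m)) :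
    (if IsDom m (fun j => lam j + chiT m T j) ∧
        (∀ j, (lam j + chiT m T j) - lam j = 0 ∨ (lam j + chiT m T j) - lam j = 1) ∧
        (∑ j, ((lam j + chiT m T j) - lam j)) = (i : ℤ) + 1 ∧
        (lam k + chiT m T k) - lam k = 1
      then schurW m (fun j => lam j + chiT m T j) else 0)
    = (if ((T.card : ℤ) = (i : ℤ) + 1 ∧ k ∈ T)
        then aAlt m (fun j => lam j + chiT m T j + deltaW m j) else 0)
        * (aAlt m (deltaW m))⁻¹ := by
  have hdiff : ∀ j, (lam j + chiT m T j) - lam j = chiT m T j := fun j => by ring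
  have h01 : ∀ j, chiT m T j = 0 ∨ chiT m T j = 1 := by
    intro j; unfold chiT; split <;> simp
  have hsum : (∑ j, chiT m T j) = (T.card : ℤ) := by
    unfold chiT
    rw [Finset.sum_boole]
    simp
  have hk1 : chiT m T k = 1 ↔ k ∈ T := by unfold chiT; split <;> simp_all
  simp only [hdiff, hsum, hk1]
  by_cases hkT : ((T.card : ℤ) = (i : ℤ) + 1 ∧ k ∈ T)
  · rw [if_pos hkT]
    by_cases hd : IsDom m (fun j => lam j + chiT m T j)
    · rw [if_pos ⟨hd, fun j => h01 j, hkT.1, hkT.2⟩]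
      rw [schurW, div_eq_mul_inv]
    · rw [if_neg (by tauto), vanish m lam hdom T hd, zero_mul]
  · rw [if_neg (by tauto), if_neg hkT, zero_mul]

lemma finsum_step (m : ℕ) (lam : Fin m → ℤ) (hdom : IsDom m lam) (k : Fin m) (i : ℕ) :
    (∑ᶠ α : Fin m → ℤ,
          if IsDom m α ∧ (∀ j, α j - lam j = 0 ∨ α j - lam j = 1) ∧
              (∑ j, (α j - lam j)) = (i : ℤ) + 1 ∧ α k - lam k = 1
          then schurW m α else 0)
    = (∑ T : Finset (Fin m),
        if ((T.card : ℤ) = (i : ℤ) + 1 ∧ k ∈ T)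
        then aAlt m (fun j => lam j + chiT m T j + deltaW m j) else 0)
        * (aAlt m (deltaW m))⁻¹ := by
  classical
  have hsupp : Function.support (fun α : Fin m → ℤ =>
      if IsDom m α ∧ (∀ j, α j - lam j = 0 ∨ α j - lam j = 1) ∧
          (∑ j, (α j - lam j)) = (i : ℤ) + 1 ∧ α k - lam k = 1
      then schurW m α else 0) ⊆
      ((Finset.univ : Finset (Finset (Fin m))).image
        (fun T => fun j => lam j + chiT m T j) : Set (Fin m → ℤ)) := by
    intro α hα
    simp only [Function.mem_support] at hα
    have hc : IsDom m α ∧ (∀ j, α j - lam j = 0 ∨ α j - lam j = 1) ∧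
        (∑ j, (α j - lam j)) = (i : ℤ) + 1 ∧ α k - lam k = 1 := by
      by_contra hc
      rw [if_neg hc] at hα
      exact hα rfl
    obtain ⟨_, h01, _, _⟩ := hc
    have hrepr : α = fun j => lam j + chiT m (Finset.univ.filter (fun j => α j = lam j + 1)) j := by
      funext j
      rcases h01 j with h | h
      · have hj : ¬ (α j = lam j + 1) := by omega
        simp only [chiT, Finset.mem_filter, Finset.mem_univ, true_and, if_neg hj]
        omega
      · have hj : α j = lam j + 1 := by omega
        simp only [chiT, Finset.mem_filter, Finset.mem_univ, true_and, if_pos hj]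
        omega
    rw [hrepr]
    simp only [Finset.coe_image, Set.mem_image]
    exact ⟨_, by simp, rfl⟩
  rw [finsum_eq_sum_of_support_subset _ hsupp]
  rw [Finset.sum_image (fun T _ T' _ h => chi_inj m lam T T' h), Finset.sum_mul]
  exact Finset.sum_congr rfl fun T _ => eval_f m lam hdom k i T

lemma R_collapse (m : ℕ) (k : Fin m) (g : Finset (Fin m) → F m) :
    ∑ i ∈ Finset.range m,
      (∑ T : Finset (Fin m), if ((T.card : ℤ) = (i : ℤ) + 1 ∧ k ∈ T) then g T else 0)
        * Yv m ^ (m - 1 - i)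
    = ∑ T ∈ Finset.univ.powerset.filter (fun T => k ∈ T), g T * Yv m ^ (m - T.card) := by
  classical
  rw [Finset.powerset_univ, Finset.sum_filter]
  simp only [Finset.sum_mul]
  rw [Finset.sum_comm]
  refine Finset.sum_congr rfl fun T _ => ?_
  by_cases hk : k ∈ T
  · have h1 : 1 ≤ T.card := Finset.card_pos.mpr ⟨k, hk⟩
    have h2 : T.card ≤ m := by
      have := Finset.card_le_univ T
      simpa using this
    rw [if_pos hk]
    rw [Finset.sum_eq_single (T.card - 1)]
    · have hcond : ((T.card : ℤ) = ((T.card - 1 : ℕ) : ℤ) + 1 ∧ k ∈ T) := by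
        constructor
        · push_cast [h1]; omega
        · exact hk
      rw [if_pos hcond]
      have he : m - 1 - (T.card - 1) = m - T.card := by omega
      rw [he]
    · intro i _ hne
      rw [if_neg, zero_mul]
      rintro ⟨hcard, -⟩
      exact hne (by omega)
    · intro hmem
      exact absurd (Finset.mem_range.mpr (by omega)) hmem
  · rw [if_neg hk]
    refine Finset.sum_eq_zero fun i _ => ?_
    rw [if_neg (by tauto), zero_mul]

/-- Lemma 2b of the paper, atypical case.
For an atypical weight `Λ = (λ; μ0)` of `gl(m|1)` with atypical root `ε_k - δ_1`,
the Su–Zhang character formula (with the atypical root removed) equals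
`(y^{μ0}/e_m(x)) · ∑_{i=0}^{m-1} (∑_{α ∈ A_{k,i}} s_α) y^{m-1-i}`. -/
theorem atypical_character_formula (m : ℕ) (hm : 1 ≤ m) (lam : Fin m → ℤ)
    (hdom : IsDom m lam) (mu0 : ℤ) (k : Fin m)
    (hatyp : lam k + (m : ℤ) + 1 - ((k : ℕ) + 1) = 1 - mu0) :
    Yv m ^ mu0 * (eX m m * aAlt m (deltaW m))⁻¹ *
      (∑ w : Equiv.Perm (Fin m), (Equiv.Perm.sign w : ℤ) •
        ((∏ i, Xv m (w i) ^ (lam i + (m : ℤ) - 1 - (i : ℕ))) * Xv m (w k) *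
          ∏ i ∈ Finset.univ.erase k, (Xv m (w i) + Yv m))) =
    Yv m ^ mu0 / eX m m *
      ∑ i ∈ Finset.range m,
        (∑ᶠ α : Fin m → ℤ,
          if IsDom m α ∧ (∀ j, α j - lam j = 0 ∨ α j - lam j = 1) ∧
              (∑ j, (α j - lam j)) = (i : ℤ) + 1 ∧ α k - lam k = 1
          then schurW m α else 0) * Yv m ^ (m - 1 - i) := by
  rw [L_lemma m lam k]
  have hR : ∀ i ∈ Finset.range m,
      (∑ᶠ α : Fin m → ℤ,
          if IsDom m α ∧ (∀ j, α j - lam j = 0 ∨ α j - lam j = 1) ∧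
              (∑ j, (α j - lam j)) = (i : ℤ) + 1 ∧ α k - lam k = 1
          then schurW m α else 0) * Yv m ^ (m - 1 - i)
      = ((∑ T : Finset (Fin m),
          if ((T.card : ℤ) = (i : ℤ) + 1 ∧ k ∈ T)
          then aAlt m (fun j => lam j + chiT m T j + deltaW m j) else 0)
          * (aAlt m (deltaW m))⁻¹) * Yv m ^ (m - 1 - i) := fun i _ => by
    rw [finsum_step m lam hdom k i]
  rw [Finset.sum_congr rfl hR]
  have hpull : ∑ i ∈ Finset.range m,
      ((∑ T : Finset (Fin m),
          if ((T.card : ℤ) = (i : ℤ) + 1 ∧ k ∈ T)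
          then aAlt m (fun j => lam j + chiT m T j + deltaW m j) else 0)
          * (aAlt m (deltaW m))⁻¹) * Yv m ^ (m - 1 - i)
      = (∑ i ∈ Finset.range m,
          (∑ T : Finset (Fin m),
            if ((T.card : ℤ) = (i : ℤ) + 1 ∧ k ∈ T)
            then aAlt m (fun j => lam j + chiT m T j + deltaW m j) else 0)
            * Yv m ^ (m - 1 - i)) * (aAlt m (deltaW m))⁻¹ := by
    rw [Finset.sum_mul]
    exact Finset.sum_congr rfl fun i _ => by ring
  rw [hpull,
    R_collapse m k (fun T => aAlt m (fun j => lam j + chiT m T j + deltaW m j)),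
    mul_inv, div_eq_mul_inv]
  ring
end

section
/- Fix integers m ≥ 1 and 0 ≤ k ≤ m. Let Λ = (λ_1, …, λ_m; −k) ∈ P_k be a special weight and let (ν; μ) = φ(Λ) be the corresponding composite partition (μ is the partition formed by the positive entries among λ_1, …, λ_{m−k}, and ν := (1−λ_m, …, 1−λ_{m−k+1})). Then there exists i ∈ {1,…,m} with λ_i + m + 1 − i = k + 1 (i.e. Λ is atypical, having the atypical root ε_i − δ_1) if and only if l(μ) + l(ν) < m; equivalently, Λ is typical if and only if l(μ) + l(ν) = m. -/
noncomputable section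

/-- `P_k`: the special weights `(λ_1, …, λ_m; -k)` (recorded by their first component `λ`):
`λ` is integral dominant with `λ_{m-k} ≥ 0` (if `k < m`) and `λ_{m-k+1} ≤ 0` (if `k > 0`);
indices are 1-based in the mathematical statement, 0-based here. -/
def Pset (m k : ℕ) (hm : 0 < m) (hk : k ≤ m) : Set (Fin m → ℤ) :=
  {lam | IsDom m lam ∧ (∀ _h : k < m, 0 ≤ lam ⟨m - k - 1, by omega⟩) ∧
    (∀ _h : 0 < k, lam ⟨m - k, by omega⟩ ≤ 0)}

/-- The partition `ν = (1 - λ_m, 1 - λ_{m-1}, …, 1 - λ_{m-k+1})` attached to a special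
weight; it has length `k`. -/
def nuOf (m k : ℕ) (hk : k ≤ m) (lam : Fin m → ℤ) : ℕ → ℕ := fun j =>
  if h : j < k then (1 - lam ⟨m - 1 - j, by omega⟩).toNat else 0

/-- The partition `μ` whose parts are the positive entries among `λ_1, …, λ_{m-k}`. -/
def muOf (m k : ℕ) (lam : Fin m → ℤ) : ℕ → ℕ := fun i =>
  if h : i < m - k then (lam ⟨i, by omega⟩).toNat else 0

/-- last claim of Lemma `lemPQ` of the paper. For a special weight
`Λ = (λ; -k) ∈ P_k` with associated composite partition `(ν; μ)` (so `l(ν) = k`),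
`Λ` is atypical — i.e. some `i ∈ {1, …, m}` satisfies `λ_i + m + 1 - i = k + 1` —
iff `l(μ) + l(ν) < m`; equivalently `Λ` is typical iff `l(μ) + l(ν) = m`. -/
theorem atypical_iff_length_lt (m k : ℕ) (hm : 0 < m) (hk : k ≤ m) (lam : Fin m → ℤ)
    (hlam : lam ∈ Pset m k hm hk) (lmu : ℕ)
    (hmu : IsPartitionOfLen (muOf m k lam) lmu) :
    ((∃ i : Fin m, lam i + (m : ℤ) + 1 - ((i : ℕ) + 1) = (k : ℤ) + 1) ↔ lmu + k < m) ∧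
      ((¬ ∃ i : Fin m, lam i + (m : ℤ) + 1 - ((i : ℕ) + 1) = (k : ℤ) + 1) ↔ lmu + k = m) := by
  obtain ⟨hdom, hpos, hneg⟩ := hlam
  -- lmu ≤ m - k
  have hbound : lmu ≤ m - k := by
    by_contra h
    push_neg at h
    have h2 := (hmu.2 (m - k)).mpr h
    simp [muOf] at h2
  have key : (∃ i : Fin m, lam i + (m : ℤ) + 1 - ((i : ℕ) + 1) = (k : ℤ) + 1) ↔ lmu + k < m := by
    constructor
    · rintro ⟨i, hi⟩
      have hilt := i.isLt
      by_cases hcase : (i : ℕ) < m - k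
      · -- here λ_i = i+1+k-m ≤ 0, so μ_i = 0, so lmu ≤ i < m-k
        have hle : lam i ≤ 0 := by omega
        have hmu0 : muOf m k lam (i : ℕ) = 0 := by
          simp only [muOf, dif_pos hcase]
          have : (⟨(i : ℕ), by omega⟩ : Fin m) = i := by ext; rfl
          rw [this]
          omega
        have hnot : ¬ ((i : ℕ) < lmu) := by
          intro h
          have := (hmu.2 (i : ℕ)).mpr h
          omega
        omega
      · exfalso
        push_neg at hcase
        have hk0 : 0 < k := by omega
        have h1 : lam i ≤ lam ⟨m - k, by omega⟩ := by
          apply hdom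
          show m - k ≤ (i : ℕ)
          omega
        have h2 := hneg hk0
        omega
    · intro hlt
      have hkm : k < m := by omega
      refine ⟨⟨m - k - 1, by omega⟩, ?_⟩
      have h1 := hpos hkm
      -- lam ⟨m-k-1⟩ ≤ 0 since muOf (m-k-1) = 0 (as lmu ≤ m-k-1)
      have hnot : ¬ (m - k - 1 < lmu) := by omega
      have h4 : muOf m k lam (m - k - 1) = 0 := by
        rcases Nat.eq_zero_or_pos (muOf m k lam (m - k - 1)) with h | h
        · exact h
        · exact absurd ((hmu.2 _).mp h) hnot
      have h5 : lam ⟨m - k - 1, by omega⟩ ≤ 0 := by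
        simp only [muOf, dif_pos (show m - k - 1 < m - k by omega)] at h4
        omega
      simp only [Fin.val_mk]
      omega
  refine ⟨key, ?_⟩
  rw [key]
  omega

end
end
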